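/- (Ill-posed world scenes for fundamental matrix estimation.) Let b ∈ ℝ⁷ with rank M(b) = 3 and let X₁,…,X₇ ∈ ℝ³ satisfy (Xᵢ)₃ ≠ 0 for all i. Let M₃(b) denote the 3×3 matrix formed by the first three columns of M(b), and for δb ∈ ℝ⁷ let δM(δb) denote the 3×4 matrix with rows (0, δb₁, δb₂, δb₃), (δb₄, δb₅, δb₆, δb₇), (0, 0, 0, 0). Consider the linear map T : (ℝ³)⁷ × ℝ⁷ → (ℝ² × ℝ²)⁷ defined by T(δX₁,…,δX₇, δb) = ( Dβ(Xᵢ)(δXᵢ), Dβ(M(b)(Xᵢ;1))( M₃(b) δXᵢ + δM(δb)(Xᵢ;1) ) )_{i=1,…,7}, where (Xᵢ;1) ∈ ℝ⁴ appends a 1 to Xᵢ and Dβ(Z) denotes the derivative of β at Z. (T is the differential of the forward projection map at the world scene (b, X₁,…,X₇).) Then T fails to be injective if and only if there exists a nonzero symmetric 4×4 real matrix Q such that (Xᵢ;1)ᵀ Q (Xᵢ;1) = 0 for every i = 1,…,7, and (s·v(b); 1)ᵀ Q (s·v(b); 1) = 0 for every s ∈ ℝ. (Geometrically: there exists a quadric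 surface passing through X₁,…,X₇ and containing the baseline, which is the line through the origin with direction v(b).) -/

import Mathlib

open Matrix

/-- The 3×4 camera matrix `M(b)` with rows `(1, b₁, b₂, b₃)`, `(b₄, b₅, b₆, b₇)`,
`(0, 0, 0, 1)`. -/
def Mcam (b : Fin 7 → ℝ) : Matrix (Fin 3) (Fin 4) ℝ :=
  !![1, b 0, b 1, b 2; b 3, b 4, b 5, b 6; 0, 0, 0, 1]

/-- The 3×3 matrix `M₃(b)` formed by the first three columns of `M(b)`. -/
def Mcam3 (b : Fin 7 → ℝ) : Matrix (Fin 3) (Fin 3) ℝ :=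
  (Mcam b).submatrix id Fin.castSucc

/-- The 3×4 matrix `δM(δb)` with rows `(0, δb₁, δb₂, δb₃)`, `(δb₄, δb₅, δb₆, δb₇)`,
`(0, 0, 0, 0)`. -/
def dM (c : Fin 7 → ℝ) : Matrix (Fin 3) (Fin 4) ℝ :=
  !![0, c 0, c 1, c 2; c 3, c 4, c 5, c 6; 0, 0, 0, 0]

/-- `v(b) = (b₂b₅ − b₁b₆, b₆ − b₂b₄, b₁b₄ − b₅)`, the direction of the baseline. -/
def vbase (b : Fin 7 → ℝ) : Fin 3 → ℝ :=
  ![b 1 * b 4 - b 0 * b 5, b 5 - b 1 * b 3, b 0 * b 3 - b 4]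

/-- `(X; 1) ∈ ℝ⁴`, appending a `1` to `X ∈ ℝ³`. -/
def app1 (X : Fin 3 → ℝ) : Fin 4 → ℝ :=
  ![X 0, X 1, X 2, 1]

/-- Matrix-vector multiplication (3×3), viewed on Euclidean space `ℝ³`. -/
noncomputable def mulVecE (R : Matrix (Fin 3) (Fin 3) ℝ) (v : EuclideanSpace ℝ (Fin 3)) :
    EuclideanSpace ℝ (Fin 3) :=
  WithLp.toLp 2 (R.mulVec v)

/-- Matrix-vector multiplication (3×4), landing in Euclidean space `ℝ³`. -/
noncomputable def mulVec4E (M : Matrix (Fin 3) (Fin 4) ℝ) (v : Fin 4 → ℝ) :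
    EuclideanSpace ℝ (Fin 3) :=
  WithLp.toLp 2 (M.mulVec v)

/-- The projection `β(a₁,a₂,a₃) = (a₁/a₃, a₂/a₃)` (junk value when `a₃ = 0`). -/
noncomputable def projE (a : EuclideanSpace ℝ (Fin 3)) : EuclideanSpace ℝ (Fin 2) :=
  (WithLp.toLp 2 ![a 0 / a 2, a 1 / a 2] : EuclideanSpace ℝ (Fin 2))

/-!
Since `Dβ(a)` kills exactly the line through `a`, a kernel vector of the differential moves each
`Xᵢ` along its viewing ray, `δXᵢ = λᵢ Xᵢ`, and the second view then requires
`λᵢ (r₀ ⬝ Yᵢ) + d₀ ⬝ Yᵢ = λᵢ (r₁ ⬝ Yᵢ) + d₁ ⬝ Yᵢ = 0`, where `Yᵢ = (Xᵢ; 1)`, `r₀, r₁` are the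
first two rows of `M₃(b)` padded by a zero and `d₀, d₁` those of `δM(δb)`. Away from the baseline
`{r₀ ⬝ Y = r₁ ⬝ Y = 0}` such a `λᵢ` exists iff `(r₀ ⬝ Yᵢ)(d₁ ⬝ Yᵢ) = (r₁ ⬝ Yᵢ)(d₀ ⬝ Yᵢ)`. This
determinant is the quadratic form of a symmetric matrix vanishing on the baseline, and as `r₀, r₁`
are independent when rank M(b) = 3, every quadric containing the baseline arises in this way from
a unique `δb`. If some `Yᵢ` lies on the baseline, both sides hold: `λ = eᵢ, δb = 0` is a kernel
vector, and the six conditions at the other points leave a nonzero `δb ∈ ℝ⁷`.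
-/

section DetQuadric

variable {n : Type*} (r₀ r₁ : n → ℝ)

def detQuadric (p q : n → ℝ) : Matrix n n ℝ :=
  vecMulVec r₀ q + vecMulVec q r₀ - vecMulVec r₁ p - vecMulVec p r₁

structure IsDualPair [Fintype n] (f₀ f₁ : n → ℝ) : Prop where
  dot₀₀ : r₀ ⬝ᵥ f₀ = 1
  dot₀₁ : r₀ ⬝ᵥ f₁ = 0
  dot₁₀ : r₁ ⬝ᵥ f₀ = 0
  dot₁₁ : r₁ ⬝ᵥ f₁ = 1

variable {r₀ r₁}

lemma detQuadric_sub_smul (p q : n → ℝ) (t : ℝ) :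
    detQuadric r₀ r₁ (p - t • r₀) (q - t • r₁) = detQuadric r₀ r₁ p q := by
  simp only [detQuadric, vecMulVec_sub, sub_vecMulVec, vecMulVec_smul, smul_vecMulVec]
  abel

@[simp] lemma detQuadric_zero : detQuadric r₀ r₁ 0 0 = 0 := by
  simp [detQuadric]

lemma detQuadric_isSymm (p q : n → ℝ) : (detQuadric r₀ r₁ p q).IsSymm := by
  simp only [Matrix.IsSymm, detQuadric, transpose_sub, transpose_add, transpose_vecMulVec]
  abel

variable [Fintype n]

lemma detQuadric_mulVec (p q x : n → ℝ) :
    detQuadric r₀ r₁ p q *ᵥ x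
      = (q ⬝ᵥ x) • r₀ + (r₀ ⬝ᵥ x) • q - (p ⬝ᵥ x) • r₁ - (r₁ ⬝ᵥ x) • p := by
  simp [detQuadric, sub_mulVec, add_mulVec, vecMulVec_mulVec]

lemma dotProduct_detQuadric_mulVec (p q Y : n → ℝ) :
    Y ⬝ᵥ detQuadric r₀ r₁ p q *ᵥ Y = 2 * ((r₀ ⬝ᵥ Y) * (q ⬝ᵥ Y) - (r₁ ⬝ᵥ Y) * (p ⬝ᵥ Y)) := by
  rw [dotProduct_comm, detQuadric_mulVec]
  simp only [sub_dotProduct, add_dotProduct, smul_dotProduct, smul_eq_mul, dotProduct_comm q,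
    dotProduct_comm p]
  ring

lemma exists_isDualPair (h : (r₀ ⬝ᵥ r₀) * (r₁ ⬝ᵥ r₁) - (r₀ ⬝ᵥ r₁) ^ 2 ≠ 0) :
    ∃ f₀ f₁, IsDualPair r₀ r₁ f₀ f₁ := by
  set g := (r₀ ⬝ᵥ r₀) * (r₁ ⬝ᵥ r₁) - (r₀ ⬝ᵥ r₁) ^ 2
  refine ⟨g⁻¹ • ((r₁ ⬝ᵥ r₁) • r₀ - (r₀ ⬝ᵥ r₁) • r₁), g⁻¹ • ((r₀ ⬝ᵥ r₀) • r₁ - (r₀ ⬝ᵥ r₁) • r₀),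
    ⟨?_, ?_, ?_, ?_⟩⟩ <;>
  simp only [dotProduct_smul, dotProduct_sub, smul_eq_mul, dotProduct_comm r₁ r₀] <;>
  field_simp <;> ring

variable {f₀ f₁ : n → ℝ}

lemma eq_smul_of_detQuadric_eq_zero (hf : IsDualPair r₀ r₁ f₀ f₁) {p q : n → ℝ}
    (h : detQuadric r₀ r₁ p q = 0) : ∃ α : ℝ, p = α • r₀ ∧ q = α • r₁ := by
  have hx : ∀ x, (q ⬝ᵥ x) • r₀ + (r₀ ⬝ᵥ x) • q - (p ⬝ᵥ x) • r₁ - (r₁ ⬝ᵥ x) • p = 0 := fun x => by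
    rw [← detQuadric_mulVec, h, zero_mulVec]
  have hq : q = (p ⬝ᵥ f₀) • r₁ - (q ⬝ᵥ f₀) • r₀ := by
    have := hx f₀
    rw [hf.dot₀₀, hf.dot₁₀] at this
    linear_combination (norm := module) this
  have hp : p = (q ⬝ᵥ f₁) • r₀ - (p ⬝ᵥ f₁) • r₁ := by
    have := hx f₁
    rw [hf.dot₀₁, hf.dot₁₁] at this
    linear_combination (norm := module) -this
  have hqf₀ : q ⬝ᵥ f₀ = 0 := by
    have := congrArg (· ⬝ᵥ f₀) hq
    simp only [sub_dotProduct, smul_dotProduct, hf.dot₀₀, hf.dot₁₀, smul_eq_mul] at this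
    linarith
  have hpf₁ : p ⬝ᵥ f₁ = 0 := by
    have := congrArg (· ⬝ᵥ f₁) hp
    simp only [sub_dotProduct, smul_dotProduct, hf.dot₀₁, hf.dot₁₁, smul_eq_mul] at this
    linarith
  have hqf₁ : q ⬝ᵥ f₁ = p ⬝ᵥ f₀ := by
    have := congrArg (· ⬝ᵥ f₁) hq
    simp only [sub_dotProduct, smul_dotProduct, hf.dot₀₁, hf.dot₁₁, smul_eq_mul] at this
    linarith
  refine ⟨p ⬝ᵥ f₀, ?_, ?_⟩
  · rwa [hpf₁, hqf₁, zero_smul, sub_zero] at hp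
  · rwa [hqf₀, zero_smul, sub_zero] at hq

/-- Every `x` is `(r₀ ⬝ᵥ x) • f₀ + (r₁ ⬝ᵥ x) • f₁` plus a vector of the common kernel of `r₀` and
`r₁`, on which `Q` vanishes. -/
lemma exists_eq_detQuadric (hf : IsDualPair r₀ r₁ f₀ f₁) {Q : Matrix n n ℝ} (hQ : Q.IsSymm)
    (hK : ∀ w w', r₀ ⬝ᵥ w = 0 → r₁ ⬝ᵥ w = 0 → r₀ ⬝ᵥ w' = 0 → r₁ ⬝ᵥ w' = 0 →
      w ⬝ᵥ Q *ᵥ w' = 0) :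
    ∃ p q, Q = detQuadric r₀ r₁ p q := by
  classical
  have hsymm : ∀ x y, Q *ᵥ x ⬝ᵥ y = x ⬝ᵥ Q *ᵥ y := fun x y => by
    rw [dotProduct_mulVec, ← mulVec_transpose, hQ.eq]
  refine ⟨-(Q *ᵥ f₁ - (f₁ ⬝ᵥ Q *ᵥ f₁ / 2) • r₁),
    Q *ᵥ f₀ - (f₀ ⬝ᵥ Q *ᵥ f₀ / 2) • r₀ - (f₀ ⬝ᵥ Q *ᵥ f₁) • r₁,
    ext_iff_mulVec.2 fun x => funext fun j => ?_⟩
  rw [← single_one_dotProduct j (Q *ᵥ x), ← single_one_dotProduct j (_ *ᵥ x),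
    detQuadric_mulVec]
  generalize (Pi.single j 1 : n → ℝ) = y
  have key := hK (y - (r₀ ⬝ᵥ y) • f₀ - (r₁ ⬝ᵥ y) • f₁) (x - (r₀ ⬝ᵥ x) • f₀ - (r₁ ⬝ᵥ x) • f₁)
    (by simp [hf.dot₀₀, hf.dot₀₁]) (by simp [hf.dot₁₀, hf.dot₁₁])
    (by simp [hf.dot₀₀, hf.dot₀₁]) (by simp [hf.dot₁₀, hf.dot₁₁])
  have h₁₀ : f₁ ⬝ᵥ Q *ᵥ f₀ = f₀ ⬝ᵥ Q *ᵥ f₁ := by rw [← hsymm, dotProduct_comm]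
  simp only [dotProduct_sub, sub_dotProduct, dotProduct_add, mulVec_sub, mulVec_smul,
    dotProduct_smul, smul_dotProduct, dotProduct_neg, neg_dotProduct, smul_eq_mul, hsymm, h₁₀,
    dotProduct_comm y r₀, dotProduct_comm y r₁] at key ⊢
  linear_combination key

end DetQuadric

lemma dotProduct_mulVec_eq_zero_of_forall_smul_add {n : Type*} [Fintype n] {Q : Matrix n n ℝ}
    (hQ : Q.IsSymm) {P E : n → ℝ} (h : ∀ s : ℝ, (s • P + E) ⬝ᵥ Q *ᵥ (s • P + E) = 0)
    (a c a' c' : ℝ) : (a • P + c • E) ⬝ᵥ Q *ᵥ (a' • P + c' • E) = 0 := by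
  have hEP : E ⬝ᵥ Q *ᵥ P = P ⬝ᵥ Q *ᵥ E := by
    rw [dotProduct_mulVec, ← mulVec_transpose, hQ.eq, dotProduct_comm]
  have h₀ := h 0
  have h₁ := h 1
  have h₂ := h (-1)
  simp only [dotProduct_add, add_dotProduct, mulVec_add, mulVec_smul, dotProduct_smul,
    smul_dotProduct, smul_eq_mul, hEP] at h₀ h₁ h₂ ⊢
  have hPP : P ⬝ᵥ Q *ᵥ P = 0 := by linear_combination (h₁ + h₂) / 2 - h₀
  have hPE : P ⬝ᵥ Q *ᵥ E = 0 := by linear_combination (h₁ - h₂) / 4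
  have hEE : E ⬝ᵥ Q *ᵥ E = 0 := by linear_combination h₀
  rw [hPP, hPE, hEE]
  ring

lemma exists_mul_add_eq_zero_iff {a₀ a₁ d₀ d₁ : ℝ} (ha : ¬(a₀ = 0 ∧ a₁ = 0)) :
    (∃ t, t * a₀ + d₀ = 0 ∧ t * a₁ + d₁ = 0) ↔ a₀ * d₁ = a₁ * d₀ := by
  constructor
  · rintro ⟨t, h₀, h₁⟩
    linear_combination a₀ * h₁ - a₁ * h₀
  · intro h
    by_cases h₀ : a₀ = 0
    · have h₁ : a₁ ≠ 0 := fun h₁ => ha ⟨h₀, h₁⟩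
      subst h₀
      refine ⟨-d₁ / a₁, ?_, ?_⟩ <;> field_simp
      · linear_combination -h
      · ring
    · refine ⟨-d₀ / a₀, ?_, ?_⟩ <;> field_simp
      · ring
      · linear_combination h

lemma hasDerivAt_projE_line {a : EuclideanSpace ℝ (Fin 3)} (ha : a 2 ≠ 0)
    (u : EuclideanSpace ℝ (Fin 3)) :
    HasDerivAt (fun t : ℝ => projE (a + t • u)) (fderiv ℝ projE a u) 0 := by
  have hdiff : DifferentiableAt ℝ projE a := by
    rw [differentiableAt_piLp]
    intro i
    fin_cases i <;>
      simp only [projE, Fin.zero_eta, Fin.mk_one, cons_val_zero, cons_val_one, cons_val_fin_one] <;>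
      fun_prop (disch := assumption)
  have hline : HasDerivAt (fun t : ℝ => a + t • u) u 0 := by
    simpa using ((hasDerivAt_id (0 : ℝ)).smul_const u).const_add a
  exact hdiff.hasFDerivAt.comp_hasDerivAt_of_eq 0 hline (by simp)

lemma fderiv_projE_apply {a : EuclideanSpace ℝ (Fin 3)} (ha : a 2 ≠ 0)
    (u : EuclideanSpace ℝ (Fin 3)) :
    fderiv ℝ projE a u =
      WithLp.toLp 2 ![(u 0 * a 2 - a 0 * u 2) / a 2 ^ 2, (u 1 * a 2 - a 1 * u 2) / a 2 ^ 2] := by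
  have h := hasDerivAt_projE_line ha u
  ext k
  have hk := ((PiLp.proj 2 (fun _ : Fin 2 => ℝ) k).hasFDerivAt).comp_hasDerivAt 0 h
  have hcoord : ∀ j : Fin 3, HasDerivAt (fun t : ℝ => a j + t * u j) (u j) 0 := fun j => by
    simpa using ((hasDerivAt_id (0 : ℝ)).mul_const (u j)).const_add (a j)
  fin_cases k
  · have := ((hcoord 0).fun_div (hcoord 2) (by simpa using ha))
    simp only [projE, Function.comp_def] at hk
    simpa using hk.unique this
  · have := ((hcoord 1).fun_div (hcoord 2) (by simpa using ha))
    simp only [projE, Function.comp_def] at hk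
    simpa using hk.unique this
lemma fderiv_projE_eq_zero_iff {a : EuclideanSpace ℝ (Fin 3)} (ha : a 2 ≠ 0)
    (u : EuclideanSpace ℝ (Fin 3)) : fderiv ℝ projE a u = 0 ↔ ∃ t : ℝ, u = t • a := by
  rw [fderiv_projE_apply ha]
  constructor
  · intro h
    have h0 := congrArg (· 0) h
    have h1 := congrArg (· 1) h
    simp only [PiLp.zero_apply, Matrix.cons_val_zero, Matrix.cons_val_one,
      Matrix.cons_val_fin_one, div_eq_zero_iff, ha, pow_eq_zero_iff, ne_eq, OfNat.ofNat_ne_zero,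
      not_false_eq_true, or_false, sub_eq_zero] at h0 h1
    refine ⟨u 2 / a 2, ?_⟩
    ext k
    fin_cases k <;> simp <;> field_simp <;> linarith
  · rintro ⟨t, rfl⟩
    ext k
    fin_cases k <;> simp <;> left <;> ring

lemma fderiv_projE_apply_of_eq_one {a u : EuclideanSpace ℝ (Fin 3)} (ha : a 2 = 1)
    (hu : u 2 = 0) : fderiv ℝ projE a u = WithLp.toLp 2 ![u 0, u 1] := by
  rw [fderiv_projE_apply (by simp [ha]), ha, hu]
  simp

namespace TwoView

/-! `camRow0 b` and `camRow1 b` are the first two rows of `M₃(b)` padded by a zero, so that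
`camRow0 b ⬝ᵥ app1 x = (M₃(b) x) 0`; the third row of `M₃(b)` vanishes. -/

def camRow0 (b : Fin 7 → ℝ) : Fin 4 → ℝ := ![1, b 0, b 1, 0]

def camRow1 (b : Fin 7 → ℝ) : Fin 4 → ℝ := ![b 3, b 4, b 5, 0]

def baselineDir (b : Fin 7 → ℝ) : Fin 4 → ℝ := ![vbase b 0, vbase b 1, vbase b 2, 0]

lemma dM_add (c c' : Fin 7 → ℝ) : dM (c + c') = dM c + dM c' := by
  ext i j
  fin_cases i <;> fin_cases j <;> simp [dM]

lemma dM_smul (t : ℝ) (c : Fin 7 → ℝ) : dM (t • c) = t • dM c := by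
  ext i j
  fin_cases i <;> fin_cases j <;> simp [dM]

lemma dM_add_apply (c c' : Fin 7 → ℝ) (k : Fin 3) : dM (c + c') k = dM c k + dM c' k :=
  congrFun (dM_add c c') k

lemma dM_smul_apply (t : ℝ) (c : Fin 7 → ℝ) (k : Fin 3) : dM (t • c) k = t • dM c k :=
  congrFun (dM_smul t c) k

@[simp] lemma dM_zero_apply (k : Fin 3) : dM 0 k = 0 := by
  ext j
  fin_cases k <;> fin_cases j <;> rfl

lemma dM_apply_zero_zero (c : Fin 7 → ℝ) : dM c 0 0 = 0 := rfl

lemma exists_dM_rows_eq {p : Fin 4 → ℝ} (hp : p 0 = 0) (q : Fin 4 → ℝ) :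
    ∃ c, dM c 0 = p ∧ dM c 1 = q := by
  refine ⟨![p 1, p 2, p 3, q 0, q 1, q 2, q 3], ?_, ?_⟩ <;> ext k <;> fin_cases k <;> simp [dM, hp]

lemma eq_zero_of_dM_rows_eq_zero {c : Fin 7 → ℝ} (h₀ : dM c 0 = 0) (h₁ : dM c 1 = 0) :
    c = 0 := by
  ext k
  fin_cases k
  exacts [congrFun h₀ 1, congrFun h₀ 2, congrFun h₀ 3, congrFun h₁ 0, congrFun h₁ 1,
    congrFun h₁ 2, congrFun h₁ 3]

lemma vbase_ne_zero {b : Fin 7 → ℝ} (hrank : (Mcam b).rank = 3) : vbase b ≠ 0 := by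
  intro hv
  have hsurj : LinearMap.range (Mcam b).mulVecLin = ⊤ :=
    Submodule.eq_top_of_finrank_eq (by rw [← Matrix.rank, hrank]; simp)
  obtain ⟨x, hx⟩ := LinearMap.range_eq_top.1 hsurj ![0, 1, 0]
  have e0 := congrFun hx 0
  have e1 := congrFun hx 1
  have e2 := congrFun hx 2
  have h1 := congrFun hv 1
  have h2 := congrFun hv 2
  simp [Mcam, vbase, Matrix.mulVec, dotProduct, Fin.sum_univ_four] at e0 e1 e2 h1 h2
  exact zero_ne_one
    (by linear_combination e1 - b 3 * e0 - (b 6 - b 2 * b 3) * e2 + x 1 * h2 - x 2 * h1)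

lemma camRow_gram_eq (b : Fin 7 → ℝ) :
    (camRow0 b ⬝ᵥ camRow0 b) * (camRow1 b ⬝ᵥ camRow1 b) - (camRow0 b ⬝ᵥ camRow1 b) ^ 2
      = vbase b ⬝ᵥ vbase b := by
  simp [camRow0, camRow1, vbase, dotProduct, Fin.sum_univ_four, Fin.sum_univ_three]
  ring

lemma app1_smul_vbase (b : Fin 7 → ℝ) (s : ℝ) :
    app1 (s • vbase b) = s • baselineDir b + Pi.single 3 1 := by
  ext k
  fin_cases k <;> simp [app1, baselineDir]

lemma camRow0_dotProduct_app1_smul_vbase (b : Fin 7 → ℝ) (s : ℝ) :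
    camRow0 b ⬝ᵥ app1 (s • vbase b) = 0 := by
  simp [camRow0, app1, vbase, dotProduct, Fin.sum_univ_four]
  ring

lemma camRow1_dotProduct_app1_smul_vbase (b : Fin 7 → ℝ) (s : ℝ) :
    camRow1 b ⬝ᵥ app1 (s • vbase b) = 0 := by
  simp [camRow1, app1, vbase, dotProduct, Fin.sum_univ_four]
  ring

lemma exists_eq_smul_baselineDir_add {b : Fin 7 → ℝ} (hv : vbase b ≠ 0) {w : Fin 4 → ℝ}
    (h₀ : camRow0 b ⬝ᵥ w = 0) (h₁ : camRow1 b ⬝ᵥ w = 0) :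
    ∃ s t : ℝ, w = s • baselineDir b + t • Pi.single 3 1 := by
  have hn : vbase b ⬝ᵥ vbase b ≠ 0 := fun h => hv (dotProduct_self_eq_zero.1 h)
  -- With `a, a'` the first three entries of `camRow0 b, camRow1 b` and `v = a' × a`, the
  -- coefficients are those of `|v|² w = (v ⬝ w) v + (a ⬝ w) (v × a') - (a' ⬝ w) (v × a)`.
  have key : (vbase b ⬝ᵥ vbase b) • w
      = (baselineDir b ⬝ᵥ w) • baselineDir b + ((vbase b ⬝ᵥ vbase b) * w 3) • Pi.single 3 1 := by
    simp only [camRow0, camRow1, dotProduct, Fin.sum_univ_four, cons_val_zero, cons_val_one,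
      cons_val, one_mul, zero_mul, add_zero] at h₀ h₁
    ext k
    fin_cases k <;>
      simp [vbase, baselineDir, dotProduct, Fin.sum_univ_three, Fin.sum_univ_four]
    · linear_combination ((b 5 - b 1 * b 3) * b 5 - (b 0 * b 3 - b 4) * b 4) * h₀
        - ((b 5 - b 1 * b 3) * b 1 - (b 0 * b 3 - b 4) * b 0) * h₁
    · linear_combination ((b 0 * b 3 - b 4) * b 3 - (b 1 * b 4 - b 0 * b 5) * b 5) * h₀
        - ((b 0 * b 3 - b 4) - (b 1 * b 4 - b 0 * b 5) * b 1) * h₁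
    · linear_combination ((b 1 * b 4 - b 0 * b 5) * b 4 - (b 5 - b 1 * b 3) * b 3) * h₀
        - ((b 1 * b 4 - b 0 * b 5) * b 0 - (b 5 - b 1 * b 3)) * h₁
  refine ⟨(vbase b ⬝ᵥ vbase b)⁻¹ * (baselineDir b ⬝ᵥ w), w 3, ?_⟩
  conv_lhs => rw [← inv_smul_smul₀ hn w, key]
  rw [smul_add, smul_smul, smul_smul, inv_mul_cancel_left₀ hn]

lemma dotProduct_mulVec_eq_zero_of_camRow {b : Fin 7 → ℝ} (hv : vbase b ≠ 0)
    {Q : Matrix (Fin 4) (Fin 4) ℝ} (hQ : Q.IsSymm)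
    (hbase : ∀ s : ℝ, app1 (s • vbase b) ⬝ᵥ Q *ᵥ app1 (s • vbase b) = 0)
    (w w' : Fin 4 → ℝ) (h₀ : camRow0 b ⬝ᵥ w = 0) (h₁ : camRow1 b ⬝ᵥ w = 0)
    (h₀' : camRow0 b ⬝ᵥ w' = 0) (h₁' : camRow1 b ⬝ᵥ w' = 0) : w ⬝ᵥ Q *ᵥ w' = 0 := by
  obtain ⟨s, t, rfl⟩ := exists_eq_smul_baselineDir_add hv h₀ h₁
  obtain ⟨s', t', rfl⟩ := exists_eq_smul_baselineDir_add hv h₀' h₁'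
  simp only [app1_smul_vbase] at hbase
  exact dotProduct_mulVec_eq_zero_of_forall_smul_add hQ (fun s => by simpa using hbase s) s t s' t'

lemma exists_quadric_iff {b : Fin 7 → ℝ} (hv : vbase b ≠ 0) (Y : Fin 7 → Fin 4 → ℝ) :
    (∃ Q : Matrix (Fin 4) (Fin 4) ℝ, Q.IsSymm ∧ Q ≠ 0 ∧ (∀ i, Y i ⬝ᵥ Q *ᵥ Y i = 0) ∧
        ∀ s : ℝ, app1 (s • vbase b) ⬝ᵥ Q *ᵥ app1 (s • vbase b) = 0) ↔
      ∃ c ≠ 0, ∀ i,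
        (camRow0 b ⬝ᵥ Y i) * (dM c 1 ⬝ᵥ Y i) = (camRow1 b ⬝ᵥ Y i) * (dM c 0 ⬝ᵥ Y i) := by
  obtain ⟨f₀, f₁, hf⟩ := exists_isDualPair (r₀ := camRow0 b) (r₁ := camRow1 b)
    (by rw [camRow_gram_eq]; exact fun h => hv (dotProduct_self_eq_zero.1 h))
  constructor
  · rintro ⟨Q, hQ, hQ0, hY, hbase⟩
    obtain ⟨p, q, rfl⟩ :=
      exists_eq_detQuadric hf hQ (dotProduct_mulVec_eq_zero_of_camRow hv hQ hbase)
    obtain ⟨c, hc₀, hc₁⟩ := exists_dM_rows_eq (p := p - p 0 • camRow0 b) (by simp [camRow0])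
      (q - p 0 • camRow1 b)
    rw [← detQuadric_sub_smul p q (p 0), ← hc₀, ← hc₁] at hQ0 hY
    refine ⟨c, ?_, fun i => ?_⟩
    · rintro rfl
      exact hQ0 (by simp)
    · have := hY i
      rw [dotProduct_detQuadric_mulVec] at this
      linarith
  · rintro ⟨c, hc, hY⟩
    refine ⟨detQuadric (camRow0 b) (camRow1 b) (dM c 0) (dM c 1), detQuadric_isSymm _ _, ?_,
      fun i => ?_, fun s => ?_⟩
    · intro h
      obtain ⟨α, h₀, h₁⟩ := eq_smul_of_detQuadric_eq_zero hf h
      have hα : α = 0 := by simpa [camRow0, dM_apply_zero_zero] using (congrFun h₀ 0).symm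
      subst hα
      exact hc (eq_zero_of_dM_rows_eq_zero (by simpa using h₀) (by simpa using h₁))
    · rw [dotProduct_detQuadric_mulVec, hY i, sub_self, mul_zero]
    · rw [dotProduct_detQuadric_mulVec, camRow0_dotProduct_app1_smul_vbase,
        camRow1_dotProduct_app1_smul_vbase]
      ring

def KernelEquations (b : Fin 7 → ℝ) (Y : Fin 7 → Fin 4 → ℝ) (l c : Fin 7 → ℝ) : Prop :=
  ∀ i, l i * (camRow0 b ⬝ᵥ Y i) + dM c 0 ⬝ᵥ Y i = 0 ∧
    l i * (camRow1 b ⬝ᵥ Y i) + dM c 1 ⬝ᵥ Y i = 0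

lemma exists_ne_zero_det_eq_zero_of_ne (b : Fin 7 → ℝ) (Y : Fin 7 → Fin 4 → ℝ) (i : Fin 7) :
    ∃ c ≠ 0, ∀ j ≠ i,
      (camRow0 b ⬝ᵥ Y j) * (dM c 1 ⬝ᵥ Y j) = (camRow1 b ⬝ᵥ Y j) * (dM c 0 ⬝ᵥ Y j) := by
  let F : (Fin 7 → ℝ) →ₗ[ℝ] (Fin 6 → ℝ) :=
    { toFun c k := (camRow0 b ⬝ᵥ Y (i.succAbove k)) * (dM c 1 ⬝ᵥ Y (i.succAbove k))
        - (camRow1 b ⬝ᵥ Y (i.succAbove k)) * (dM c 0 ⬝ᵥ Y (i.succAbove k))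
      map_add' c c' := by
        ext k
        simp only [dM_add_apply, add_dotProduct, Pi.add_apply]
        ring
      map_smul' t c := by
        ext k
        simp only [dM_smul_apply, smul_dotProduct, smul_eq_mul, RingHom.id_apply, Pi.smul_apply]
        ring }
  obtain ⟨c, hcF, hc⟩ :=
    (Submodule.ne_bot_iff _).1 (LinearMap.ker_ne_bot_of_finrank_lt (f := F) (by simp))
  refine ⟨c, hc, fun j hj => ?_⟩
  obtain ⟨k, rfl⟩ := Fin.exists_succAbove_eq hj
  exact sub_eq_zero.1 (congrFun (LinearMap.mem_ker.1 hcF) k)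

lemma exists_kernelEquations_iff (b : Fin 7 → ℝ) (Y : Fin 7 → Fin 4 → ℝ) :
    (∃ l c, (l, c) ≠ 0 ∧ KernelEquations b Y l c) ↔
      ∃ c ≠ 0, ∀ i,
        (camRow0 b ⬝ᵥ Y i) * (dM c 1 ⬝ᵥ Y i) = (camRow1 b ⬝ᵥ Y i) * (dM c 0 ⬝ᵥ Y i) := by
  by_cases hdeg : ∃ i, camRow0 b ⬝ᵥ Y i = 0 ∧ camRow1 b ⬝ᵥ Y i = 0
  · obtain ⟨i, h₀, h₁⟩ := hdeg
    refine iff_of_true ⟨Pi.single i 1, 0, by simp, fun j => ?_⟩ ?_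
    · rcases eq_or_ne j i with rfl | hj
      · simp [h₀, h₁]
      · simp [hj]
    · obtain ⟨c, hc, hcY⟩ := exists_ne_zero_det_eq_zero_of_ne b Y i
      refine ⟨c, hc, fun j => ?_⟩
      rcases eq_or_ne j i with rfl | hj
      · rw [h₀, h₁, zero_mul, zero_mul]
      · exact hcY j hj
  · have hdeg' : ∀ i, ¬(camRow0 b ⬝ᵥ Y i = 0 ∧ camRow1 b ⬝ᵥ Y i = 0) := fun i h => hdeg ⟨i, h⟩
    constructor
    · rintro ⟨l, c, hlc, hl⟩
      refine ⟨c, ?_, fun i => (exists_mul_add_eq_zero_iff (hdeg' i)).1 ⟨l i, hl i⟩⟩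
      rintro rfl
      refine hlc (Prod.mk_eq_zero.2 ⟨funext fun i => ?_, rfl⟩)
      obtain ⟨h₀, h₁⟩ := hl i
      simp only [dM_zero_apply, zero_dotProduct, add_zero, mul_eq_zero] at h₀ h₁
      by_contra hli
      exact hdeg' i ⟨h₀.resolve_left hli, h₁.resolve_left hli⟩
    · rintro ⟨c, hc, hcY⟩
      choose l hl using fun i => (exists_mul_add_eq_zero_iff (hdeg' i)).2 (hcY i)
      exact ⟨l, c, fun h => hc (Prod.mk_eq_zero.1 h).2, hl⟩

noncomputable def forwardDiff (b : Fin 7 → ℝ) (X : Fin 7 → EuclideanSpace ℝ (Fin 3)) :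
    ((Fin 7 → EuclideanSpace ℝ (Fin 3)) × (Fin 7 → ℝ)) →ₗ[ℝ]
      (Fin 7 → EuclideanSpace ℝ (Fin 2) × EuclideanSpace ℝ (Fin 2)) where
  toFun p i :=
    (fderiv ℝ projE (X i) (p.1 i),
     fderiv ℝ projE (mulVec4E (Mcam b) (app1 (X i)))
       (mulVecE (Mcam3 b) (p.1 i) + mulVec4E (dM p.2) (app1 (X i))))
  map_add' p p' := by
    ext i : 1
    simp only [Prod.fst_add, Prod.snd_add, Pi.add_apply, Prod.mk_add_mk, map_add, mulVecE,
      mulVec4E, WithLp.ofLp_add, mulVec_add, WithLp.toLp_add, dM_add, add_mulVec, Prod.mk.injEq,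
      true_and]
    abel
  map_smul' t p := by
    ext i : 1
    simp [mulVecE, mulVec4E, dM_smul, mulVec_smul, smul_mulVec]

lemma mulVec4E_Mcam_app1_two (b : Fin 7 → ℝ) (x : Fin 3 → ℝ) :
    mulVec4E (Mcam b) (app1 x) 2 = 1 := by
  simp [mulVec4E, Mcam, app1]

lemma mulVecE_Mcam3_smul_add (b c : Fin 7 → ℝ) (t : ℝ) (x : EuclideanSpace ℝ (Fin 3)) :
    mulVecE (Mcam3 b) (t • x) + mulVec4E (dM c) (app1 x) =
      WithLp.toLp 2 ![t * (camRow0 b ⬝ᵥ app1 x) + dM c 0 ⬝ᵥ app1 x,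
        t * (camRow1 b ⬝ᵥ app1 x) + dM c 1 ⬝ᵥ app1 x, 0] := by
  ext k
  fin_cases k <;>
    simp [mulVecE, mulVec4E, Mcam3, Mcam, dM, camRow0, camRow1, app1, Matrix.mulVec, dotProduct,
      Fin.sum_univ_three, Fin.sum_univ_four] <;> ring

lemma fderiv_projE_pair_eq_zero_iff (b c : Fin 7 → ℝ) {x : EuclideanSpace ℝ (Fin 3)}
    (hx : x 2 ≠ 0) (w : EuclideanSpace ℝ (Fin 3)) :
    (fderiv ℝ projE x w = 0 ∧
      fderiv ℝ projE (mulVec4E (Mcam b) (app1 x))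
        (mulVecE (Mcam3 b) w + mulVec4E (dM c) (app1 x)) = 0) ↔
      ∃ t : ℝ, w = t • x ∧ t * (camRow0 b ⬝ᵥ app1 x) + dM c 0 ⬝ᵥ app1 x = 0 ∧
        t * (camRow1 b ⬝ᵥ app1 x) + dM c 1 ⬝ᵥ app1 x = 0 := by
  rw [fderiv_projE_eq_zero_iff hx]
  constructor
  · rintro ⟨⟨t, rfl⟩, h⟩
    rw [mulVecE_Mcam3_smul_add,
      fderiv_projE_apply_of_eq_one (mulVec4E_Mcam_app1_two b x) (by simp)] at h
    exact ⟨t, rfl, by simpa using h⟩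
  · rintro ⟨t, rfl, h₀, h₁⟩
    refine ⟨⟨t, rfl⟩, ?_⟩
    rw [mulVecE_Mcam3_smul_add,
      fderiv_projE_apply_of_eq_one (mulVec4E_Mcam_app1_two b x) (by simp), h₀, h₁]
    simp

lemma forwardDiff_eq_zero_iff {b : Fin 7 → ℝ} {X : Fin 7 → EuclideanSpace ℝ (Fin 3)}
    (hX : ∀ i, X i 2 ≠ 0) (w : Fin 7 → EuclideanSpace ℝ (Fin 3)) (c : Fin 7 → ℝ) :
    forwardDiff b X (w, c) = 0 ↔
      ∃ l : Fin 7 → ℝ, (∀ i, w i = l i • X i) ∧ KernelEquations b (fun i => app1 (X i)) l c := by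
  simp only [forwardDiff, LinearMap.coe_mk, AddHom.coe_mk, funext_iff, Pi.zero_apply,
    Prod.mk_eq_zero, fderiv_projE_pair_eq_zero_iff b c (hX _), Classical.skolem,
    KernelEquations, forall_and]

lemma not_injective_forwardDiff_iff {b : Fin 7 → ℝ} {X : Fin 7 → EuclideanSpace ℝ (Fin 3)}
    (hX : ∀ i, X i 2 ≠ 0) :
    ¬ Function.Injective (forwardDiff b X) ↔
      ∃ l c, (l, c) ≠ 0 ∧ KernelEquations b (fun i => app1 (X i)) l c := by
  have hX₀ : ∀ i, X i ≠ 0 := fun i h => hX i (by simp [h])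
  simp only [injective_iff_map_eq_zero, not_forall, exists_prop]
  constructor
  · rintro ⟨⟨w, c⟩, hwc, hne⟩
    obtain ⟨l, hw, hl⟩ := (forwardDiff_eq_zero_iff hX w c).1 hwc
    refine ⟨l, c, fun hlc => hne ?_, hl⟩
    obtain ⟨rfl, rfl⟩ := Prod.mk_eq_zero.1 hlc
    simp [funext_iff, hw]
  · rintro ⟨l, c, hlc, hl⟩
    refine ⟨(fun i => l i • X i, c), (forwardDiff_eq_zero_iff hX _ c).2 ⟨l, fun _ => rfl, hl⟩,
      fun h => hlc ?_⟩
    obtain ⟨hw, rfl⟩ := Prod.mk_eq_zero.1 h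
    simp only [funext_iff, Pi.zero_apply, smul_eq_zero, hX₀, or_false] at hw
    simp [funext_iff, hw]

end TwoView

/-- Ill-posed world scenes for fundamental matrix estimation: the differential `T` of the
uncalibrated two-view forward projection map at the world scene `(b, X₁, …, X₇)` fails to be
injective iff there exists a quadric surface (a nonzero symmetric 4×4 matrix `Q`) passing
through `X₁, …, X₇` and containing the baseline, the line through the origin with
direction `v(b)`. -/
theorem illposed_world_scenes_fundamental
    (b : Fin 7 → ℝ) (hrank : (Mcam b).rank = 3)
    (X : Fin 7 → EuclideanSpace ℝ (Fin 3))
    (hX : ∀ i, X i 2 ≠ 0) :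
    ¬ Function.Injective
        (fun p : (Fin 7 → EuclideanSpace ℝ (Fin 3)) × (Fin 7 → ℝ) =>
          fun i : Fin 7 =>
            (fderiv ℝ projE (X i) (p.1 i),
             fderiv ℝ projE (mulVec4E (Mcam b) (app1 (X i)))
               (mulVecE (Mcam3 b) (p.1 i) + mulVec4E (dM p.2) (app1 (X i))))) ↔
      ∃ Q : Matrix (Fin 4) (Fin 4) ℝ, Q.IsSymm ∧ Q ≠ 0 ∧
        (∀ i, app1 (X i) ⬝ᵥ Q.mulVec (app1 (X i)) = 0) ∧
        (∀ s : ℝ, app1 (s • vbase b) ⬝ᵥ Q.mulVec (app1 (s • vbase b)) = 0) := by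
  change ¬ Function.Injective (TwoView.forwardDiff b X) ↔ _
  rw [TwoView.not_injective_forwardDiff_iff hX, TwoView.exists_kernelEquations_iff,
    TwoView.exists_quadric_iff (TwoView.vbase_ne_zero hrank)]
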